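/- arXiv:2002.06592 — 6 statements merged into one kernel-verified Lean document; each statement's English description precedes it below -/
import Mathlib

section
/- Let M, M' be w×w left stochastic matrices and R ∈ ℝ^w a vector with nonnegative entries. Then for any probability vector D, |Rᵀ(M − M')D| ≤ (‖R‖_∞ / 2) · ∑_{i,j} |M(i,j) − M'(i,j)|. -/
open Matrix Finset

noncomputable section

/-- ℓ1 norm of a vector. -/
def l1 {w : ℕ} (x : Fin w → ℝ) : ℝ := ∑ i, |x i|

/-- ℓ∞ norm of a vector. -/
def linf {w : ℕ} (x : Fin w → ℝ) : ℝ := ⨆ i, |x i|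

/-- Left (column-)stochastic matrix: nonnegative entries, each column sums to 1. -/
def IsStoch {a b : ℕ} (M : Matrix (Fin a) (Fin b) ℝ) : Prop :=
  (∀ i j, 0 ≤ M i j) ∧ ∀ j, ∑ i, M i j = 1

/-- Probability vector. -/
def IsProb {w : ℕ} (D : Fin w → ℝ) : Prop := (∀ i, 0 ≤ D i) ∧ ∑ i, D i = 1

/-- Entrywise ℓ1 cost of modifying M0 into M. -/
def cost {a b : ℕ} (M M0 : Matrix (Fin a) (Fin b) ℝ) : ℝ := ∑ i, ∑ j, |M i j - M0 i j|

/-- The product M (n-1) * ⋯ * M 0 (so that `M 0` is applied first to a vector). -/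
def chainProd {n w : ℕ} (M : Fin n → Matrix (Fin w) (Fin w) ℝ) : Matrix (Fin w) (Fin w) ℝ :=
  ((List.ofFn M).reverse).prod
theorem stmt3 {w : ℕ} (M M' : Matrix (Fin w) (Fin w) ℝ) (hM : IsStoch M) (hM' : IsStoch M')
    (R : Fin w → ℝ) (hR : ∀ i, 0 ≤ R i) (D : Fin w → ℝ) (hD : IsProb D) :
    |R ⬝ᵥ (M - M').mulVec D| ≤ linf R / 2 * cost M M' := by
  rcases Nat.eq_zero_or_pos w with hw | hw
  · subst hw
    simp [dotProduct, cost, linf]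
  haveI : Nonempty (Fin w) := ⟨⟨0, hw⟩⟩
  set c : ℝ := linf R / 2 with hc
  have hRle : ∀ i, R i ≤ linf R := by
    intro i
    have := le_ciSup (f := fun k => |R k|) (Set.Finite.bddAbove (Set.finite_range _)) i
    calc R i ≤ |R i| := le_abs_self _
    _ ≤ linf R := this
  have hlinf0 : 0 ≤ linf R := le_trans (hR ⟨0, hw⟩) (hRle ⟨0, hw⟩)
  have hc0 : 0 ≤ c := by positivity
  -- rewrite LHS
  have hLHS : R ⬝ᵥ (M - M').mulVec D
      = ∑ j, D j * ∑ i, R i * (M i j - M' i j) := by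
    simp only [dotProduct, mulVec, Matrix.sub_apply, Finset.mul_sum]
    rw [Finset.sum_comm]
    congr 1; ext j; congr 1; ext i; ring
  rw [hLHS]
  -- column sums of difference are zero
  have hcol : ∀ j, ∑ i, (M i j - M' i j) = 0 := by
    intro j
    rw [Finset.sum_sub_distrib, hM.2 j, hM'.2 j, sub_self]
  have key : ∀ j, |∑ i, R i * (M i j - M' i j)| ≤ c * ∑ i, |M i j - M' i j| := by
    intro j
    have h1 : ∑ i, R i * (M i j - M' i j)
        = ∑ i, (R i - c) * (M i j - M' i j) := by
      simp only [sub_mul, Finset.sum_sub_distrib, ← Finset.mul_sum, hcol j, mul_zero, sub_zero]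
    rw [h1]
    calc |∑ i, (R i - c) * (M i j - M' i j)|
        ≤ ∑ i, |(R i - c) * (M i j - M' i j)| := Finset.abs_sum_le_sum_abs _ _
      _ ≤ ∑ i, c * |M i j - M' i j| := by
          apply Finset.sum_le_sum
          intro i _
          rw [abs_mul]
          apply mul_le_mul_of_nonneg_right _ (abs_nonneg _)
          rw [abs_le]
          constructor
          · have := hR i; simp only [hc]; linarith
          · have := hRle i; simp only [hc]; linarith
      _ = c * ∑ i, |M i j - M' i j| := by rw [Finset.mul_sum]
  have hD1 : ∀ j, D j ≤ 1 := by
    intro j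
    rw [← hD.2]
    exact Finset.single_le_sum (fun i _ => hD.1 i) (Finset.mem_univ j)
  calc |∑ j, D j * ∑ i, R i * (M i j - M' i j)|
      ≤ ∑ j, |D j * ∑ i, R i * (M i j - M' i j)| := Finset.abs_sum_le_sum_abs _ _
    _ ≤ ∑ j, c * ∑ i, |M i j - M' i j| := by
        apply Finset.sum_le_sum
        intro j _
        rw [abs_mul, abs_of_nonneg (hD.1 j)]
        calc D j * |∑ i, R i * (M i j - M' i j)|
            ≤ 1 * |∑ i, R i * (M i j - M' i j)| :=
              mul_le_mul_of_nonneg_right (hD1 j) (abs_nonneg _)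
          _ = |∑ i, R i * (M i j - M' i j)| := one_mul _
          _ ≤ c * ∑ i, |M i j - M' i j| := key j
    _ = c * cost M M' := by
        rw [← Finset.mul_sum, cost, Finset.sum_comm]

end
end

section
/- Consider transition matrices M₁,…,M_{k−1} (each a w×w left stochastic matrix) satisfying ∑_{t=1}^{k−1} c(M_t, M_t⁰) ≤ B, where each M_t⁰ is also left stochastic, and let R ∈ ℝ^w be nonnegative and D₁ a probability vector. Then Rᵀ M_{k−1}⋯M₁ D₁ ≤ Rᵀ M_{k−1}⁰⋯M₁⁰ D₁ + (B/2)·‖R‖_∞. -/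
open Matrix Finset

noncomputable section

lemma chainProd_succ {n w : ℕ} (M : Fin (n+1) → Matrix (Fin w) (Fin w) ℝ) :
    chainProd M = chainProd (fun i : Fin n => M i.succ) * M 0 := by
  simp [chainProd, List.ofFn_succ, List.prod_append]

lemma cost_nonneg {a b : ℕ} (M M0 : Matrix (Fin a) (Fin b) ℝ) : 0 ≤ cost M M0 :=
  Finset.sum_nonneg fun i _ => Finset.sum_nonneg fun j _ => abs_nonneg _

lemma stoch_prob {w : ℕ} {A : Matrix (Fin w) (Fin w) ℝ} {D : Fin w → ℝ}
    (hA : IsStoch A) (hD : IsProb D) : IsProb (A.mulVec D) := by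
  constructor
  · intro i
    simp only [Matrix.mulVec, dotProduct]
    exact Finset.sum_nonneg fun j _ => mul_nonneg (hA.1 i j) (hD.1 j)
  · simp only [Matrix.mulVec, dotProduct]
    calc ∑ i, ∑ j, A i j * D j = ∑ j, (∑ i, A i j) * D j := by
          rw [Finset.sum_comm]
          simp [Finset.sum_mul]
    _ = 1 := by simp [hA.2, hD.2]

lemma vecMul_bound {w : ℕ} {L : ℝ} {S : Fin w → ℝ}
    (hS : ∀ i, 0 ≤ S i ∧ S i ≤ L) {A : Matrix (Fin w) (Fin w) ℝ} (hA : IsStoch A) :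
    ∀ j, 0 ≤ (S ᵥ* A) j ∧ (S ᵥ* A) j ≤ L := by
  intro j
  simp only [Matrix.vecMul, dotProduct]
  constructor
  · exact Finset.sum_nonneg fun i _ => mul_nonneg (hS i).1 (hA.1 i j)
  · calc ∑ i, S i * A i j ≤ ∑ i, L * A i j :=
        Finset.sum_le_sum fun i _ => mul_le_mul_of_nonneg_right (hS i).2 (hA.1 i j)
    _ = L := by rw [← Finset.mul_sum, hA.2 j, mul_one]

lemma chain_vecMul_bound {n w : ℕ} {L : ℝ} {S : Fin w → ℝ}
    (hS : ∀ i, 0 ≤ S i ∧ S i ≤ L) {M : Fin n → Matrix (Fin w) (Fin w) ℝ}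
    (hM : ∀ t, IsStoch (M t)) :
    ∀ j, 0 ≤ (S ᵥ* chainProd M) j ∧ (S ᵥ* chainProd M) j ≤ L := by
  induction n generalizing S with
  | zero => simpa [chainProd] using hS
  | succ n ih =>
      rw [chainProd_succ, ← Matrix.vecMul_vecMul]
      exact vecMul_bound (ih hS (fun t => hM t.succ)) (hM 0)

lemma swap_bound {w : ℕ} {L : ℝ} (hL : 0 ≤ L) {S : Fin w → ℝ}
    (hS : ∀ i, 0 ≤ S i ∧ S i ≤ L) {A A0 : Matrix (Fin w) (Fin w) ℝ}
    (hA : IsStoch A) (hA0 : IsStoch A0) {P : Fin w → ℝ} (hP : IsProb P) :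
    S ⬝ᵥ A.mulVec P ≤ S ⬝ᵥ A0.mulVec P + cost A A0 / 2 * L := by
  have key : ∀ j, ∑ i, S i * (A i j - A0 i j) ≤ (∑ i, |A i j - A0 i j|) / 2 * L := by
    intro j
    have hsum : ∑ i, (A i j - A0 i j) = 0 := by
      rw [Finset.sum_sub_distrib, hA.2 j, hA0.2 j]; ring
    have h1 : ∀ i ∈ Finset.univ, S i * (A i j - A0 i j) ≤ L * max (A i j - A0 i j) 0 := by
      intro i _
      rcases le_or_gt 0 (A i j - A0 i j) with h | h
      · rw [max_eq_left h]
        exact mul_le_mul_of_nonneg_right (hS i).2 h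
      · rw [max_eq_right h.le]
        simpa using mul_nonpos_of_nonneg_of_nonpos (hS i).1 h.le
    calc ∑ i, S i * (A i j - A0 i j) ≤ ∑ i, L * max (A i j - A0 i j) 0 :=
          Finset.sum_le_sum h1
    _ = L * ∑ i, (|A i j - A0 i j| + (A i j - A0 i j)) / 2 := by
          rw [Finset.mul_sum]
          congr 1; ext i
          congr 1
          rcases le_or_gt 0 (A i j - A0 i j) with h | h
          · rw [max_eq_left h, abs_of_nonneg h]; ring
          · rw [max_eq_right h.le, abs_of_neg h]; ring
    _ = (∑ i, |A i j - A0 i j|) / 2 * L := by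
          have heq : ∑ i, (|A i j - A0 i j| + (A i j - A0 i j)) / 2
              = ((∑ i, |A i j - A0 i j|) + ∑ i, (A i j - A0 i j)) / 2 := by
            rw [← Finset.sum_div, Finset.sum_add_distrib]
          rw [heq, hsum]
          ring
  have hPle : ∀ j, P j ≤ 1 := by
    intro j
    rw [← hP.2]
    exact Finset.single_le_sum (fun i _ => hP.1 i) (Finset.mem_univ j)
  have expand : S ⬝ᵥ A.mulVec P - S ⬝ᵥ A0.mulVec P
      = ∑ j, (∑ i, S i * (A i j - A0 i j)) * P j := by
    simp only [dotProduct, Matrix.mulVec, Finset.mul_sum, ← Finset.sum_sub_distrib,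
      Finset.sum_mul]
    rw [Finset.sum_comm]
    congr 1; ext i; congr 1; ext j; ring
  have hbound : S ⬝ᵥ A.mulVec P - S ⬝ᵥ A0.mulVec P ≤ cost A A0 / 2 * L := by
    rw [expand]
    have step1 : ∀ j ∈ Finset.univ, (∑ i, S i * (A i j - A0 i j)) * P j
        ≤ ((∑ i, |A i j - A0 i j|) / 2 * L) * P j := fun j _ =>
      mul_le_mul_of_nonneg_right (key j) (hP.1 j)
    have step2 : ∀ j ∈ Finset.univ, ((∑ i, |A i j - A0 i j|) / 2 * L) * P j
        ≤ (∑ i, |A i j - A0 i j|) / 2 * L := by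
      intro j _
      have hnn : 0 ≤ (∑ i, |A i j - A0 i j|) / 2 * L :=
        mul_nonneg (div_nonneg (Finset.sum_nonneg fun i _ => abs_nonneg _) (by norm_num)) hL
      calc ((∑ i, |A i j - A0 i j|) / 2 * L) * P j
          ≤ ((∑ i, |A i j - A0 i j|) / 2 * L) * 1 :=
            mul_le_mul_of_nonneg_left (hPle j) hnn
      _ = _ := by ring
    calc ∑ j, (∑ i, S i * (A i j - A0 i j)) * P j
        ≤ ∑ j, (∑ i, |A i j - A0 i j|) / 2 * L :=
          Finset.sum_le_sum fun j hj => le_trans (step1 j hj) (step2 j hj)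
    _ = cost A A0 / 2 * L := by
        rw [cost, Finset.sum_comm]
        rw [← Finset.sum_mul, ← Finset.sum_div]
  linarith

lemma main_ind {w : ℕ} {L : ℝ} (hL : 0 ≤ L) :
    ∀ n (M M0 : Fin n → Matrix (Fin w) (Fin w) ℝ),
    (∀ t, IsStoch (M t)) → (∀ t, IsStoch (M0 t)) →
    ∀ R : Fin w → ℝ, (∀ i, 0 ≤ R i ∧ R i ≤ L) → ∀ D : Fin w → ℝ, IsProb D →
    R ⬝ᵥ (chainProd M).mulVec D ≤ R ⬝ᵥ (chainProd M0).mulVec D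
      + (∑ t, cost (M t) (M0 t)) / 2 * L := by
  intro n
  induction n with
  | zero =>
      intro M M0 _ _ R hR D hD
      simp [chainProd]
  | succ n ih =>
      intro M M0 hM hM0 R hR D hD
      rw [chainProd_succ M, chainProd_succ M0]
      rw [← Matrix.mulVec_mulVec, ← Matrix.mulVec_mulVec]
      rw [Matrix.dotProduct_mulVec R (chainProd fun i => M i.succ),
          Matrix.dotProduct_mulVec R (chainProd fun i => M0 i.succ)]
      set S : Fin w → ℝ := R ᵥ* chainProd (fun i : Fin n => M i.succ) with hSdef
      have hSb := chain_vecMul_bound hR (fun t => hM t.succ) (M := fun i : Fin n => M i.succ)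
      have h1 : S ⬝ᵥ (M 0).mulVec D ≤ S ⬝ᵥ (M0 0).mulVec D + cost (M 0) (M0 0) / 2 * L :=
        swap_bound hL hSb (hM 0) (hM0 0) hD
      have h2 : S ⬝ᵥ (M0 0).mulVec D
          ≤ (R ᵥ* chainProd fun i : Fin n => M0 i.succ) ⬝ᵥ (M0 0).mulVec D
            + (∑ t : Fin n, cost (M t.succ) (M0 t.succ)) / 2 * L := by
        rw [hSdef, ← Matrix.dotProduct_mulVec, ← Matrix.dotProduct_mulVec]
        exact ih (fun i => M i.succ) (fun i => M0 i.succ) (fun t => hM t.succ)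
          (fun t => hM0 t.succ) R hR _ (stoch_prob (hM0 0) hD)
      have hsum : ∑ t : Fin (n+1), cost (M t) (M0 t)
          = cost (M 0) (M0 0) + ∑ t : Fin n, cost (M t.succ) (M0 t.succ) :=
        Fin.sum_univ_succ _
      rw [hsum]
      linarith

theorem stmt4 {n w : ℕ} (M M0 : Fin n → Matrix (Fin w) (Fin w) ℝ)
    (hM : ∀ t, IsStoch (M t)) (hM0 : ∀ t, IsStoch (M0 t)) (B : ℝ)
    (hB : ∑ t, cost (M t) (M0 t) ≤ B)
    (R : Fin w → ℝ) (hR : ∀ i, 0 ≤ R i) (D1 : Fin w → ℝ) (hD1 : IsProb D1) :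
    R ⬝ᵥ (chainProd M).mulVec D1 ≤ R ⬝ᵥ (chainProd M0).mulVec D1 + B / 2 * linf R := by
  rcases Nat.eq_zero_or_pos w with hw | hw
  · subst hw
    exact absurd hD1.2 (by simp)
  have : Nonempty (Fin w) := ⟨⟨0, hw⟩⟩
  have hRle : ∀ i, R i ≤ linf R := by
    intro i
    calc R i ≤ |R i| := le_abs_self _
    _ ≤ linf R := by
        rw [linf]
        exact le_ciSup (Set.Finite.bddAbove (Set.finite_range fun i => |R i|)) i
  have hLnn : 0 ≤ linf R := le_trans (hR ⟨0, hw⟩) (hRle ⟨0, hw⟩)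
  have key := main_ind hLnn n M M0 hM hM0 R (fun i => ⟨hR i, hRle i⟩) D1 hD1
  have hBnn : (∑ t, cost (M t) (M0 t)) / 2 * linf R ≤ B / 2 * linf R := by
    apply mul_le_mul_of_nonneg_right _ hLnn
    linarith
  linarith

end
end

section
/- Suppose 0 ≤ B ≤ 2w. Let M⁰ be a w×w left stochastic matrix. Then there exists a left stochastic matrix M with c(M, M⁰) ≤ B and M(1, j) ≥ B/(2w) for every column j ∈ [w]. -/
open Matrix Finset

noncomputable section

/-! Mix `M⁰` with weight `λ = B / (2w)` into the matrix sending every column to node `1` (index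
`0` here). The mixture is stochastic and every entry of row `1` is at least `λ`; its cost is `λ`
times the cost between the endpoints, and two stochastic matrices with `w` columns are at cost at
most `2w`, each column contributing at most `1 + 1`. -/

section Stochastic

variable {a b : ℕ}

def pointMassMatrix (i₀ : Fin a) : Matrix (Fin a) (Fin b) ℝ :=
  Matrix.of fun i _ => if i = i₀ then 1 else 0

theorem isStoch_pointMassMatrix (i₀ : Fin a) : IsStoch (pointMassMatrix i₀ : Matrix _ (Fin b) ℝ) :=
  ⟨fun i _ => by simp only [pointMassMatrix, Matrix.of_apply]; split_ifs <;> norm_num,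
    fun _ => by simp [pointMassMatrix]⟩

theorem IsStoch.lineMap {M N : Matrix (Fin a) (Fin b) ℝ} (hM : IsStoch M) (hN : IsStoch N)
    {t : ℝ} (ht₀ : 0 ≤ t) (ht₁ : t ≤ 1) : IsStoch ((1 - t) • M + t • N) := by
  refine ⟨fun i j => ?_, fun j => ?_⟩
  · have := hM.1 i j
    have := hN.1 i j
    simp only [Matrix.add_apply, Matrix.smul_apply, smul_eq_mul]
    nlinarith
  · simp only [Matrix.add_apply, Matrix.smul_apply, smul_eq_mul, sum_add_distrib, ← mul_sum,
      hM.2 j, hN.2 j]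
    ring

theorem cost_lineMap (M N : Matrix (Fin a) (Fin b) ℝ) {t : ℝ} (ht : 0 ≤ t) :
    cost ((1 - t) • M + t • N) M = t * cost N M := by
  have hentry (i j) : |((1 - t) • M + t • N) i j - M i j| = t * |N i j - M i j| := by
    simp only [Matrix.add_apply, Matrix.smul_apply, smul_eq_mul]
    rw [show (1 - t) * M i j + t * N i j - M i j = t * (N i j - M i j) by ring, abs_mul,
      abs_of_nonneg ht]
  simp only [cost, hentry, mul_sum]

theorem IsStoch.cost_le {M N : Matrix (Fin a) (Fin b) ℝ} (hM : IsStoch M) (hN : IsStoch N) :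
    cost M N ≤ 2 * b := by
  have hcol (j) : ∑ i, |M i j - N i j| ≤ 2 :=
    calc ∑ i, |M i j - N i j| ≤ ∑ i, (M i j + N i j) :=
          sum_le_sum fun i _ => (abs_sub _ _).trans_eq <| by
            rw [abs_of_nonneg (hM.1 i j), abs_of_nonneg (hN.1 i j)]
      _ = 2 := by rw [sum_add_distrib, hM.2 j, hN.2 j]; norm_num
  calc cost M N = ∑ j, ∑ i, |M i j - N i j| := sum_comm
    _ ≤ ∑ _j : Fin b, (2 : ℝ) := sum_le_sum fun j _ => hcol j
    _ = 2 * b := by simp [mul_comm]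

end Stochastic

theorem stmt6 {w : ℕ} (hw : 0 < w) (B : ℝ) (hB0 : 0 ≤ B) (hB : B ≤ 2 * w)
    (M0 : Matrix (Fin w) (Fin w) ℝ) (hM0 : IsStoch M0) :
    ∃ M : Matrix (Fin w) (Fin w) ℝ, IsStoch M ∧ cost M M0 ≤ B ∧
      ∀ j, B / (2 * w) ≤ M ⟨0, hw⟩ j := by
  have hw' : (0 : ℝ) < 2 * w := by positivity
  set t := B / (2 * w)
  have ht₀ : 0 ≤ t := div_nonneg hB0 hw'.le
  have ht₁ : t ≤ 1 := (div_le_one hw').2 hB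
  have hN := isStoch_pointMassMatrix (b := w) ⟨0, hw⟩
  refine ⟨(1 - t) • M0 + t • pointMassMatrix ⟨0, hw⟩, hM0.lineMap hN ht₀ ht₁, ?_, fun j => ?_⟩
  · calc cost _ M0 = t * cost (pointMassMatrix ⟨0, hw⟩) M0 := cost_lineMap _ _ ht₀
      _ ≤ t * (2 * w) := mul_le_mul_of_nonneg_left (hN.cost_le hM0) ht₀
      _ = B := div_mul_cancel₀ B hw'.ne'
  · have := hM0.1 ⟨0, hw⟩ j
    simp only [Matrix.add_apply, Matrix.smul_apply, smul_eq_mul, pointMassMatrix, Matrix.of_apply,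
      if_true]
    nlinarith

end
end

section
/- For every w ∈ ℕ and every δ > 0, there is a two-layer pipeline instance with budget B ∈ (0, 2] and all edges malleable whose price of fairness P_f = OPT_SW / W_fair is at least w − δ, where OPT_SW is the maximal welfare under budget B and W_fair is the welfare of the (unique) maximin-optimal solution. -/
open Matrix Finset

noncomputable section

/-- Initial transition matrix of the two-layer example: every starting node goes
to the reward-0 node (node 1 of the final layer) with probability 1. -/
def M0ex (w : ℕ) : Matrix (Fin 2) (Fin w) ℝ := Matrix.of fun i _ => if i = 0 then 0 else 1

/-- Starting distribution (1 - (w-1)ε, ε, …, ε). -/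
def D1ex (w : ℕ) (ε : ℝ) : Fin w → ℝ := fun j => if (j : ℕ) = 0 then 1 - ((w : ℝ) - 1) * ε else ε

/-- Reward vector (1, 0) on the two final nodes. -/
def Rex : Fin 2 → ℝ := ![1, 0]

/-!
For a column-stochastic `M`, the cost of reaching `M` from `M0ex w` is twice the mass
`∑ j, M 0 j` routed to the reward-1 node, so budget `2` means exactly `∑ j, M 0 j ≤ 1`.
The welfare `∑ j, M 0 j * D j` is then maximised by routing only the heaviest start node,
which gives `1 - (w - 1) ε`. The maximin value `⨅ j, M 0 j` is at most `1 / w`, and the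
uniform row attains it, so a maximin-optimal solution has `M 0 j = 1 / w` for every `j` and
welfare `1 / w`. The ratio `w (1 - (w - 1) ε)` is at least `w - δ` once `w² ε ≤ δ`.
-/

lemma Rex_eq_single : Rex = Pi.single 0 1 := by
  ext i; fin_cases i <;> rfl

lemma Rex_dotProduct_mulVec {w : ℕ} (M : Matrix (Fin 2) (Fin w) ℝ) (v : Fin w → ℝ) :
    Rex ⬝ᵥ M *ᵥ v = ∑ j, M 0 j * v j := by
  rw [Rex_eq_single, single_one_dotProduct]; rfl

lemma Rex_dotProduct_mulVec_single {w : ℕ} (M : Matrix (Fin 2) (Fin w) ℝ) (j : Fin w) :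
    Rex ⬝ᵥ M *ᵥ Pi.single j 1 = M 0 j := by
  rw [Rex_eq_single, single_one_dotProduct, mulVec_single_one]; rfl

namespace IsStoch

variable {w : ℕ} {M : Matrix (Fin 2) (Fin w) ℝ}

lemma row_one_eq (hM : IsStoch M) (j : Fin w) : M 1 j = 1 - M 0 j := by
  have := hM.2 j
  rw [Fin.sum_univ_two] at this
  linarith

lemma cost_M0ex (hM : IsStoch M) : cost M (M0ex w) = 2 * ∑ j, M 0 j := by
  simp only [cost, Fin.sum_univ_two, M0ex, of_apply, Fin.one_eq_zero_iff, OfNat.ofNat_ne_one,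
    if_true, if_false, sub_zero, hM.row_one_eq, sub_sub_cancel_left, abs_neg,
    abs_of_nonneg (hM.1 0 _)]
  ring

lemma sum_row_zero_le_one (hM : IsStoch M) (hc : cost M (M0ex w) ≤ 2) : ∑ j, M 0 j ≤ 1 := by
  rw [hM.cost_M0ex] at hc
  linarith

end IsStoch

def ofRewardProb {w : ℕ} (p : Fin w → ℝ) : Matrix (Fin 2) (Fin w) ℝ :=
  of fun i j => if i = 0 then p j else 1 - p j

lemma isStoch_ofRewardProb {w : ℕ} {p : Fin w → ℝ} (h0 : ∀ j, 0 ≤ p j) (h1 : ∀ j, p j ≤ 1) :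
    IsStoch (ofRewardProb p) := by
  refine ⟨fun i j => ?_, fun j => ?_⟩
  · fin_cases i <;> simp [ofRewardProb, h0, h1]
  · simp [ofRewardProb, Fin.sum_univ_two]

lemma cost_ofRewardProb_le_two {w : ℕ} {p : Fin w → ℝ} (h0 : ∀ j, 0 ≤ p j) (h1 : ∀ j, p j ≤ 1)
    (hsum : ∑ j, p j ≤ 1) : cost (ofRewardProb p) (M0ex w) ≤ 2 := by
  rw [(isStoch_ofRewardProb h0 h1).cost_M0ex]
  simpa [ofRewardProb] using hsum

lemma sum_D1ex {w : ℕ} [NeZero w] (ε : ℝ) : ∑ j, D1ex w ε j = 1 := by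
  obtain ⟨n, rfl⟩ := Nat.exists_eq_succ_of_ne_zero (NeZero.ne w)
  simp [D1ex, Fin.sum_univ_succ]

lemma D1ex_le_D1ex_zero {w : ℕ} [NeZero w] {ε : ℝ} (hε : w * ε ≤ 1) (j : Fin w) :
    D1ex w ε j ≤ D1ex w ε 0 := by
  simp only [D1ex, Fin.val_zero, if_true]
  split_ifs <;> linarith

lemma sum_mul_le_of_sum_le_one {ι : Type*} [Fintype ι] {p D : ι → ℝ} {c : ℝ}
    (hp : ∀ j, 0 ≤ p j) (hsum : ∑ j, p j ≤ 1) (hD : ∀ j, D j ≤ c) (hc : 0 ≤ c) :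
    ∑ j, p j * D j ≤ c :=
  calc ∑ j, p j * D j ≤ ∑ j, p j * c := sum_le_sum fun j _ => by gcongr; exacts [hp j, hD j]
    _ = (∑ j, p j) * c := (sum_mul ..).symm
    _ ≤ c := mul_le_of_le_one_left hc hsum

lemma eq_inv_card_of_le_iInf {ι : Type*} [Fintype ι] [Nonempty ι] {p : ι → ℝ}
    (hinf : (Fintype.card ι : ℝ)⁻¹ ≤ ⨅ j, p j) (hsum : ∑ j, p j ≤ 1) (j : ι) :
    p j = (Fintype.card ι : ℝ)⁻¹ := by
  have hle : ∀ k, (Fintype.card ι : ℝ)⁻¹ ≤ p k := fun k =>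
    hinf.trans (ciInf_le (Set.finite_range p).bddBelow k)
  have hsum_const : ∑ _k : ι, (Fintype.card ι : ℝ)⁻¹ = 1 := by simp [card_univ]
  have hsum_eq : ∑ _k : ι, (Fintype.card ι : ℝ)⁻¹ = ∑ k, p k :=
    le_antisymm (sum_le_sum fun k _ => hle k) (hsum_const ▸ hsum)
  exact ((sum_eq_sum_iff_of_le fun k _ => hle k).1 hsum_eq j (mem_univ j)).symm

lemma isGreatest_welfare {w : ℕ} {D : Fin w → ℝ} {j₀ : Fin w} (hD : ∀ j, D j ≤ D j₀)
    (hD₀ : 0 ≤ D j₀) :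
    IsGreatest {x : ℝ | ∃ M : Matrix (Fin 2) (Fin w) ℝ,
      IsStoch M ∧ cost M (M0ex w) ≤ 2 ∧ x = Rex ⬝ᵥ M.mulVec D} (D j₀) := by
  have h0 : ∀ j, 0 ≤ (Pi.single j₀ 1 : Fin w → ℝ) j := fun j => by
    rcases eq_or_ne j j₀ with rfl | h <;> simp [*]
  have h1 : ∀ j, (Pi.single j₀ 1 : Fin w → ℝ) j ≤ 1 := fun j => by
    rcases eq_or_ne j j₀ with rfl | h <;> simp [*]
  refine ⟨⟨ofRewardProb (Pi.single j₀ 1), isStoch_ofRewardProb h0 h1,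
    cost_ofRewardProb_le_two h0 h1 (by simp), ?_⟩, ?_⟩
  · rw [Rex_dotProduct_mulVec]
    simp [ofRewardProb, Pi.single_apply]
  · rintro x ⟨M, hM, hc, rfl⟩
    rw [Rex_dotProduct_mulVec]
    exact sum_mul_le_of_sum_le_one (hM.1 0) (hM.sum_row_zero_le_one hc) hD hD₀

lemma row_zero_eq_of_isGreatest_maximin {w : ℕ} [NeZero w] {Mf : Matrix (Fin 2) (Fin w) ℝ}
    (hMf : IsStoch Mf) (hc : cost Mf (M0ex w) ≤ 2)
    (hG : IsGreatest {x : ℝ | ∃ M : Matrix (Fin 2) (Fin w) ℝ,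
      IsStoch M ∧ cost M (M0ex w) ≤ 2 ∧ x = ⨅ j : Fin w, Rex ⬝ᵥ M.mulVec (Pi.single j 1)}
      (⨅ j : Fin w, Rex ⬝ᵥ Mf.mulVec (Pi.single j 1))) (j : Fin w) :
    Mf 0 j = (w : ℝ)⁻¹ := by
  have hw : (1 : ℝ) ≤ w := by exact_mod_cast Nat.one_le_iff_ne_zero.2 (NeZero.ne w)
  have h0 : ∀ _ : Fin w, (0 : ℝ) ≤ (w : ℝ)⁻¹ := fun _ => by positivity
  have h1 : ∀ _ : Fin w, (w : ℝ)⁻¹ ≤ 1 := fun _ => inv_le_one_of_one_le₀ hw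
  have huniform : (w : ℝ)⁻¹ ≤ ⨅ j, Mf 0 j := by
    simp only [Rex_dotProduct_mulVec_single] at hG
    refine hG.2 ⟨ofRewardProb fun _ => (w : ℝ)⁻¹, isStoch_ofRewardProb h0 h1,
      cost_ofRewardProb_le_two h0 h1 ?_, ?_⟩
    · simp [mul_inv_cancel₀ (NeZero.ne (w : ℝ))]
    · simp [ofRewardProb]
  simpa using eq_inv_card_of_le_iInf (by simpa using huniform) (hMf.sum_row_zero_le_one hc) j

theorem stmt10 (w : ℕ) (hw : 0 < w) (δ : ℝ) (hδ : 0 < δ) :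
    ∃ ε B OPT : ℝ, 0 < ε ∧ 0 < B ∧ B ≤ 2 ∧
      IsGreatest
        {x : ℝ | ∃ M : Matrix (Fin 2) (Fin w) ℝ,
          IsStoch M ∧ cost M (M0ex w) ≤ B ∧ x = Rex ⬝ᵥ M.mulVec (D1ex w ε)} OPT ∧
      ∀ Mf : Matrix (Fin 2) (Fin w) ℝ, IsStoch Mf → cost Mf (M0ex w) ≤ B →
        IsGreatest
          {x : ℝ | ∃ M : Matrix (Fin 2) (Fin w) ℝ,
            IsStoch M ∧ cost M (M0ex w) ≤ B ∧
            x = ⨅ j : Fin w, Rex ⬝ᵥ M.mulVec (Pi.single j 1)}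
          (⨅ j : Fin w, Rex ⬝ᵥ Mf.mulVec (Pi.single j 1)) →
        (w : ℝ) - δ ≤ OPT / (Rex ⬝ᵥ Mf.mulVec (D1ex w ε)) := by
  have : NeZero w := ⟨hw.ne'⟩
  have hw₁ : (1 : ℝ) ≤ w := by exact_mod_cast hw
  set ε := min δ 1 / (w : ℝ) ^ 2 with hε
  have hεpos : 0 < ε := by positivity
  have hεδ : (w : ℝ) ^ 2 * ε ≤ δ := by
    rw [hε, mul_div_cancel₀ _ (by positivity)]; exact min_le_left _ _
  have hwε : (w : ℝ) * ε ≤ 1 := by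
    calc (w : ℝ) * ε ≤ (w : ℝ) ^ 2 * ε := by gcongr; nlinarith
      _ = min δ 1 := mul_div_cancel₀ _ (by positivity)
      _ ≤ 1 := min_le_right _ _
  have hD₀ : D1ex w ε 0 = 1 - ((w : ℝ) - 1) * ε := by simp [D1ex]
  refine ⟨ε, 2, D1ex w ε 0, hεpos, two_pos, le_rfl,
    isGreatest_welfare (D1ex_le_D1ex_zero hwε) (by rw [hD₀]; nlinarith), ?_⟩
  intro Mf hMf hc hG
  have hfair : Rex ⬝ᵥ Mf.mulVec (D1ex w ε) = (w : ℝ)⁻¹ := by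
    simp only [Rex_dotProduct_mulVec, row_zero_eq_of_isGreatest_maximin hMf hc hG, ← mul_sum,
      sum_D1ex, mul_one]
  rw [hfair, div_inv_eq_mul, hD₀]
  nlinarith

end
end

section
/- There exists an instance of the pipeline intervention problem (with some edges non-malleable) for which the ex-ante maximin value is strictly greater than the ex-post maximin value: a 4-layer instance with budget B > 0 small enough and two symmetric starting nodes u₁, v₁ such that OPT_RMM ≥ (1/2)(1/8 + (1/2 + B/6)³) while OPT_MM < (1/2)(1/8 + (1/2 + B/6)³). -/
open Matrix Finset

noncomputable section

/- The 4-layer separation instance.  Layer 1 = {u₁ = 0, v₁ = 1};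
layers 2,3 = {u = 0, v = 1, sink = 2}; layer 4 = {u₄ = 0 (reward 1), z = 1 (reward 0)}. -/

def M1init : Matrix (Fin 3) (Fin 2) ℝ := !![1/2, 0; 0, 1/2; 1/2, 1/2]
def M2init : Matrix (Fin 3) (Fin 3) ℝ := !![1/2, 0, 0; 0, 1/2, 0; 1/2, 1/2, 1]
def M3init : Matrix (Fin 2) (Fin 3) ℝ := !![1/2, 1/2, 0; 1/2, 1/2, 1]

/-- Feasibility in the separation instance: stochasticity, the non-malleable
columns (those leaving the sink nodes x and y) are unchanged, and total cost ≤ B. -/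
def FeasSep (B : ℝ) (M1 : Matrix (Fin 3) (Fin 2) ℝ) (M2 : Matrix (Fin 3) (Fin 3) ℝ)
    (M3 : Matrix (Fin 2) (Fin 3) ℝ) : Prop :=
  IsStoch M1 ∧ IsStoch M2 ∧ IsStoch M3 ∧
  (∀ i, M2 i 2 = M2init i 2) ∧ (∀ i, M3 i 2 = M3init i 2) ∧
  cost M1 M1init + cost M2 M2init + cost M3 M3init ≤ B

/-- Expected reward of starting node j. -/
def valSep (M1 : Matrix (Fin 3) (Fin 2) ℝ) (M2 : Matrix (Fin 3) (Fin 3) ℝ)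
    (M3 : Matrix (Fin 2) (Fin 3) ℝ) (j : Fin 2) : ℝ :=
  (![1, 0] : Fin 2 → ℝ) ⬝ᵥ M3.mulVec (M2.mulVec (M1.mulVec (Pi.single j 1)))

/-! Randomizing between investing the whole budget `B = 1` along the `u`-path and along the
`v`-path raises each of the three path edges there from `1/2` to `2/3` (at cost `1/3` each, the
mass being taken from the sink edge), so every start node gets `(8/27 + 1/8)/2 = 91/432` in
expectation.

For a single allocation, the instance is symmetric under exchanging the two paths, so we may
assume that `u₂` reaches `u₄` at least as likely as `v₂`. Since a column of a stochastic matrix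
changed by `c` in ℓ¹ gains at most `c/2` on any set of rows, the reward of `u₁` is at most
`(1 + c)/2` times the value of `u₂` (with `c` the budget spent on the column of `u₁`), and `v₁`
can profit from the better node `u₂` only through its cross edge, of mass at most `c/2`.
Bounding the values of `u₂, v₂` in the same way (splitting on which last edge is stronger) gives
two polynomial inequalities in the six column budgets that cannot both reach `91/432`. -/

theorem two_mul_sum_sub_le_sum_abs_sub {ι : Type*} [Fintype ι] [DecidableEq ι] {x y : ι → ℝ}
    (h : ∑ i, x i = ∑ i, y i) (s : Finset ι) : 2 * ∑ i ∈ s, (x i - y i) ≤ ∑ i, |x i - y i| := by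
  have hzero : ∑ i ∈ s, (x i - y i) + ∑ i ∈ sᶜ, (x i - y i) = 0 := by
    rw [Finset.sum_add_sum_compl, Finset.sum_sub_distrib, h, sub_self]
  have hs : ∑ i ∈ s, (x i - y i) ≤ ∑ i ∈ s, |x i - y i| :=
    Finset.sum_le_sum fun i _ => le_abs_self _
  have hsc : -∑ i ∈ sᶜ, (x i - y i) ≤ ∑ i ∈ sᶜ, |x i - y i| := by
    rw [← Finset.sum_neg_distrib]; exact Finset.sum_le_sum fun i _ => neg_le_abs _
  linarith [Finset.sum_add_sum_compl s fun i => |x i - y i|]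

theorem mul_add_mul_le_of_le {x y p q α β : ℝ} (hx : x ≤ α) (hxy : x + y ≤ β) (hq : 0 ≤ q)
    (hqp : q ≤ p) : x * p + y * q ≤ α * (p - q) + β * q :=
  calc x * p + y * q = x * (p - q) + (x + y) * q := by ring
    _ ≤ α * (p - q) + β * q := by gcongr

theorem mul_add_mul_le_of_add_le {x y p q β : ℝ} (hy : 0 ≤ y) (hxy : x + y ≤ β) (hq : 0 ≤ q)
    (hqp : q ≤ p) : x * p + y * q ≤ β * p := by
  nlinarith [mul_add_mul_le_of_le (by linarith : x ≤ β) hxy hq hqp]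

def colCost {a b : ℕ} (M M0 : Matrix (Fin a) (Fin b) ℝ) (j : Fin b) : ℝ :=
  ∑ i, |M i j - M0 i j|

theorem cost_eq_sum_colCost {a b : ℕ} (M M0 : Matrix (Fin a) (Fin b) ℝ) :
    cost M M0 = ∑ j, colCost M M0 j :=
  Finset.sum_comm

theorem colCost_nonneg {a b : ℕ} (M M0 : Matrix (Fin a) (Fin b) ℝ) (j : Fin b) :
    0 ≤ colCost M M0 j :=
  Finset.sum_nonneg fun _ _ => abs_nonneg _

theorem colCost_eq_zero {a b : ℕ} {M M0 : Matrix (Fin a) (Fin b) ℝ} {j : Fin b}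
    (h : ∀ i, M i j = M0 i j) : colCost M M0 j = 0 := by
  simp [colCost, h]

section IsStoch

variable {a b : ℕ} {M M0 : Matrix (Fin a) (Fin b) ℝ}

theorem IsStoch.sum_le_add_half_colCost (hM : IsStoch M) (hM0 : IsStoch M0) (j : Fin b)
    (s : Finset (Fin a)) : ∑ i ∈ s, M i j ≤ ∑ i ∈ s, M0 i j + colCost M M0 j / 2 := by
  have := two_mul_sum_sub_le_sum_abs_sub (x := fun i => M i j) (y := fun i => M0 i j)
    ((hM.2 j).trans (hM0.2 j).symm) s
  rw [Finset.sum_sub_distrib] at this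
  unfold colCost; linarith

theorem IsStoch.le_add_half_colCost (hM : IsStoch M) (hM0 : IsStoch M0) (i : Fin a)
    (j : Fin b) : M i j ≤ M0 i j + colCost M M0 j / 2 := by
  simpa using hM.sum_le_add_half_colCost hM0 j {i}

theorem IsStoch.add_le_add_half_colCost (hM : IsStoch M) (hM0 : IsStoch M0) {i i' : Fin a}
    (hi : i ≠ i') (j : Fin b) : M i j + M i' j ≤ M0 i j + M0 i' j + colCost M M0 j / 2 := by
  simpa [Finset.sum_pair hi, add_assoc] using hM.sum_le_add_half_colCost hM0 j {i, i'}

end IsStoch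

theorem isStoch_M1init : IsStoch M1init :=
  ⟨fun i j => by fin_cases i <;> fin_cases j <;> norm_num [M1init],
    fun j => by fin_cases j <;> norm_num [M1init, Fin.sum_univ_succ]⟩

theorem isStoch_M2init : IsStoch M2init :=
  ⟨fun i j => by fin_cases i <;> fin_cases j <;> norm_num [M2init],
    fun j => by fin_cases j <;> norm_num [M2init, Fin.sum_univ_succ]⟩

theorem isStoch_M3init : IsStoch M3init :=
  ⟨fun i j => by fin_cases i <;> fin_cases j <;> norm_num [M3init],
    fun j => by fin_cases j <;> norm_num [M3init, Fin.sum_univ_two]⟩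

theorem incompatible_bounds_three_budgets {c x y : ℝ} (hc : 0 ≤ c) (hx : 0 ≤ x)
    (hsum : c + x + y ≤ 1) (h₀ : 91/54 ≤ (1 + c) * (1 + x/2)^2)
    (h₁ : 91/54 ≤ 1 + y * (1 + x/2)^2) : False := by
  -- Adding the two bounds gives `(2 - x)(2 + x)² ≥ 256/27`, the maximum of the left side,
  -- attained only at `x = 2/3`; for `x ≥ 3/5` the second bound alone fails.
  rcases le_total x (3/5) with hx' | hx'
  · have key : (256:ℝ)/27 ≤ (2-x)*(2+x)^2 := by
      nlinarith [mul_nonneg (by linarith : (0:ℝ) ≤ 1 - c - x - y) (sq_nonneg (2+x))]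
    nlinarith [mul_nonneg (mul_nonneg (by linarith : (0:ℝ) ≤ 2/3 - x)
        (by linarith : (0:ℝ) ≤ 2/3 - x)) (by linarith : (0:ℝ) ≤ x + 10/3),
      mul_nonneg (mul_nonneg (by linarith : (0:ℝ) ≤ 3/5 - x)
        (by linarith : (0:ℝ) ≤ 3/5 - x)) hx,
      sq_nonneg (x - 2/3)]
  · have key : (74:ℝ)/27 ≤ (1-x)*(2+x)^2 := by
      nlinarith [mul_nonneg (by linarith : (0:ℝ) ≤ 1 - c - x - y) (sq_nonneg (2+x)),
        mul_nonneg hc (sq_nonneg (2+x))]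
    nlinarith [mul_nonneg (by linarith : (0:ℝ) ≤ x - 3/5) hx, sq_nonneg (x - 3/5)]

theorem incompatible_bounds_five_budgets {c₀ c₁ k c e : ℝ}
    (h₀ : 0 ≤ c₀) (h₁ : 0 ≤ c₁) (hk : 0 ≤ k) (hc : 0 ≤ c) (he : 0 ≤ e)
    (hsum : c₀ + c₁ + k + c + e ≤ 1)
    (hu : 91/54 ≤ (1 + c₀) * (1 + k * (1 + e)))
    (hv : 91/54 ≤ c₁ * (1 + k * (1 + e)) + (1 + e) * (1 + c)) : False := by
  nlinarith [mul_nonneg h₀ hk, mul_nonneg hk he, mul_nonneg h₁ hk, mul_nonneg he hc,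
    mul_nonneg (mul_nonneg h₁ hk) he, mul_nonneg (mul_nonneg h₀ hk) he,
    sq_nonneg (k - 2*c₁), sq_nonneg (k - e), sq_nonneg (c₀ + c₁ + k + c + e - 1),
    mul_nonneg h₀ he, mul_nonneg h₀ hc, mul_nonneg h₁ hc]

theorem incompatible_bounds_of_u₃_stronger {c₁₀ c₁₁ c₂₀ c₂₁ c₃₀ c₃₁ : ℝ} (h₁₀ : 0 ≤ c₁₀)
    (h₁₁ : 0 ≤ c₁₁) (h₂₀ : 0 ≤ c₂₀) (h₂₁ : 0 ≤ c₂₁) (h₃₀ : 0 ≤ c₃₀) (h₃₁ : 0 ≤ c₃₁)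
    (hsum : c₁₀ + c₁₁ + c₂₀ + c₂₁ + c₃₀ + c₃₁ ≤ 1)
    (hu : 91/54 ≤ (1 + c₁₀) * ((1 + c₂₀) * (1 + c₃₀)))
    (hv : 91/54 ≤ c₁₁ * ((1 + c₂₀) * (1 + c₃₀)) + c₂₁ * (1 + c₃₀) + (1 + c₃₁)) : False := by
  have amgm : (1 + c₂₀) * (1 + c₃₀) ≤ (1 + (c₂₀ + c₃₀)/2)^2 := by
    nlinarith [sq_nonneg (c₂₀ - c₃₀)]
  have hs₃₀ : 1 + c₃₀ ≤ (1 + (c₂₀ + c₃₀)/2)^2 := by nlinarith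
  have hs : 1 ≤ (1 + (c₂₀ + c₃₀)/2)^2 := by linarith
  refine incompatible_bounds_three_budgets h₁₀ (add_nonneg h₂₀ h₃₀)
    (by linarith : c₁₀ + (c₂₀ + c₃₀) + (c₁₁ + c₂₁ + c₃₁) ≤ 1)
    (hu.trans (mul_le_mul_of_nonneg_left amgm (by linarith))) ?_
  nlinarith [mul_le_mul_of_nonneg_left amgm h₁₁, mul_le_mul_of_nonneg_left hs₃₀ h₂₁,
    mul_le_mul_of_nonneg_left hs h₃₁]

theorem incompatible_bounds_of_v₃_stronger {c₁₀ c₁₁ c₂₀ c₂₁ c₃₀ c₃₁ : ℝ} (h₁₀ : 0 ≤ c₁₀)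
    (h₁₁ : 0 ≤ c₁₁) (h₂₀ : 0 ≤ c₂₀) (h₂₁ : 0 ≤ c₂₁) (h₃₀ : 0 ≤ c₃₀) (h₃₁ : 0 ≤ c₃₁)
    (hsum : c₁₀ + c₁₁ + c₂₀ + c₂₁ + c₃₀ + c₃₁ ≤ 1)
    (hu : 91/54 ≤ (1 + c₁₀) * ((1 + c₃₀) + c₂₀ * (1 + c₃₁)))
    (hv : 91/54 ≤ c₁₁ * ((1 + c₃₀) + c₂₀ * (1 + c₃₁)) + (1 + c₂₁) * (1 + c₃₁)) : False := by
  have hk : (1 + c₃₀) + c₂₀ * (1 + c₃₁) ≤ 1 + (c₃₀ + c₂₀) * (1 + c₃₁) := by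
    nlinarith [mul_nonneg h₃₀ h₃₁]
  refine incompatible_bounds_five_budgets h₁₀ h₁₁ (add_nonneg h₃₀ h₂₀) h₂₁ h₃₁ (by linarith)
    (hu.trans (mul_le_mul_of_nonneg_left hk (by linarith))) ?_
  nlinarith [mul_le_mul_of_nonneg_left hk h₁₁]

abbrev σ₂ : Equiv.Perm (Fin 2) := Equiv.swap 0 1
abbrev σ₃ : Equiv.Perm (Fin 3) := Equiv.swap 0 1

theorem IsStoch.submatrix {a b : ℕ} {M : Matrix (Fin a) (Fin b) ℝ} (hM : IsStoch M)
    (e : Fin a ≃ Fin a) (f : Fin b → Fin b) : IsStoch (M.submatrix e f) :=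
  ⟨fun _ _ => hM.1 _ _, fun j => (e.sum_comp fun i => M i (f j)).trans (hM.2 _)⟩

theorem cost_submatrix {a b : ℕ} (M M0 : Matrix (Fin a) (Fin b) ℝ) (e : Fin a ≃ Fin a)
    (f : Fin b ≃ Fin b) : cost (M.submatrix e f) (M0.submatrix e f) = cost M M0 := by
  simp only [cost, submatrix_apply]
  rw [e.sum_comp fun i => ∑ j, |M i (f j) - M0 i (f j)|]
  exact Finset.sum_congr rfl fun i _ => f.sum_comp fun j => |M i j - M0 i j|

theorem M1init_swap : M1init.submatrix σ₃ σ₂ = M1init := by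
  ext i j; fin_cases i <;> fin_cases j <;> simp [M1init, Equiv.swap_apply_of_ne_of_ne]

theorem M2init_swap : M2init.submatrix σ₃ σ₃ = M2init := by
  ext i j; fin_cases i <;> fin_cases j <;> simp [M2init, Equiv.swap_apply_of_ne_of_ne]

theorem M3init_swap : M3init.submatrix id σ₃ = M3init := by
  ext i j; fin_cases i <;> fin_cases j <;> simp [M3init, Equiv.swap_apply_of_ne_of_ne]

theorem FeasSep.swap {B : ℝ} {M1 : Matrix (Fin 3) (Fin 2) ℝ} {M2 : Matrix (Fin 3) (Fin 3) ℝ}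
    {M3 : Matrix (Fin 2) (Fin 3) ℝ} (h : FeasSep B M1 M2 M3) :
    FeasSep B (M1.submatrix σ₃ σ₂) (M2.submatrix σ₃ σ₃) (M3.submatrix id σ₃) := by
  obtain ⟨h1, h2, h3, hf2, hf3, hcost⟩ := h
  refine ⟨h1.submatrix _ _, h2.submatrix _ _, h3.submatrix (Equiv.refl _) _, fun i => ?_,
    fun i => ?_, ?_⟩
  · rw [← M2init_swap]; exact hf2 _
  · rw [← M3init_swap]; exact hf3 _
  · have h3c : cost (M3.submatrix id σ₃) (M3init.submatrix id σ₃) = cost M3 M3init :=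
      cost_submatrix M3 M3init (Equiv.refl _) σ₃
    rwa [← M1init_swap, ← M2init_swap, ← M3init_swap, cost_submatrix, cost_submatrix, h3c]

theorem valSep_swap (M1 : Matrix (Fin 3) (Fin 2) ℝ) (M2 : Matrix (Fin 3) (Fin 3) ℝ)
    (M3 : Matrix (Fin 2) (Fin 3) ℝ) (j : Fin 2) :
    valSep (M1.submatrix σ₃ σ₂) (M2.submatrix σ₃ σ₃) (M3.submatrix id σ₃) j
      = valSep M1 M2 M3 (σ₂ j) := by
  have : (Pi.single j 1 : Fin 2 → ℝ) ∘ σ₂.symm = Pi.single (σ₂ j) 1 := by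
    funext i; simp [Pi.single_apply, Equiv.swap_apply_eq_iff]
  simp only [valSep, submatrix_mulVec_equiv, this, Function.comp_assoc, Equiv.self_comp_symm,
    Function.comp_id]

/-- The probability of reaching `u₄` from layer-2 node `k`; it omits the path through the sink,
which is correct as soon as `M3 0 2 = 0`. -/
def reach (M2 : Matrix (Fin 3) (Fin 3) ℝ) (M3 : Matrix (Fin 2) (Fin 3) ℝ) (k : Fin 3) : ℝ :=
  M2 0 k * M3 0 0 + M2 1 k * M3 0 1

theorem valSep_eq {M1 : Matrix (Fin 3) (Fin 2) ℝ} {M2 : Matrix (Fin 3) (Fin 3) ℝ}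
    {M3 : Matrix (Fin 2) (Fin 3) ℝ} (hf2 : ∀ i, M2 i 2 = M2init i 2)
    (hf3 : ∀ i, M3 i 2 = M3init i 2) (j : Fin 2) :
    valSep M1 M2 M3 j = M1 0 j * reach M2 M3 0 + M1 1 j * reach M2 M3 1 := by
  simp [valSep, reach, mulVec, dotProduct, Fin.sum_univ_succ, Pi.single_apply, hf2, hf3,
    M2init, M3init]
  ring

theorem reach_swap (M2 : Matrix (Fin 3) (Fin 3) ℝ) (M3 : Matrix (Fin 2) (Fin 3) ℝ) (k : Fin 3) :
    reach (M2.submatrix σ₃ σ₃) (M3.submatrix id σ₃) k = reach M2 M3 (σ₃ k) := by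
  simp [reach, add_comm]

section Layers

variable {B : ℝ} {M1 : Matrix (Fin 3) (Fin 2) ℝ} {M2 : Matrix (Fin 3) (Fin 3) ℝ}
  {M3 : Matrix (Fin 2) (Fin 3) ℝ}

theorem FeasSep.colCost_sum_le (h : FeasSep B M1 M2 M3) :
    colCost M1 M1init 0 + colCost M1 M1init 1 + colCost M2 M2init 0 + colCost M2 M2init 1
      + colCost M3 M3init 0 + colCost M3 M3init 1 ≤ B := by
  obtain ⟨-, -, -, hf2, hf3, hcost⟩ := h
  simp only [cost_eq_sum_colCost, Fin.sum_univ_two, Fin.sum_univ_three] at hcost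
  rw [colCost_eq_zero hf2, colCost_eq_zero hf3] at hcost
  linarith

theorem reach_nonneg (h2 : IsStoch M2) (h3 : IsStoch M3) (k : Fin 3) : 0 ≤ reach M2 M3 k :=
  add_nonneg (mul_nonneg (h2.1 0 k) (h3.1 0 0)) (mul_nonneg (h2.1 1 k) (h3.1 0 1))

theorem FeasSep.valSep_zero_le (h : FeasSep B M1 M2 M3) (hr : reach M2 M3 1 ≤ reach M2 M3 0) :
    valSep M1 M2 M3 0 ≤ (1 + colCost M1 M1init 0)/2 * reach M2 M3 0 := by
  obtain ⟨h1, h2, h3, hf2, hf3, -⟩ := h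
  have hcol : M1 0 0 + M1 1 0 ≤ 1/2 + 0 + colCost M1 M1init 0 / 2 :=
    h1.add_le_add_half_colCost isStoch_M1init (by decide) 0
  rw [valSep_eq hf2 hf3]
  exact mul_add_mul_le_of_add_le (h1.1 1 0) (by linarith) (reach_nonneg h2 h3 1) hr

theorem FeasSep.valSep_one_le (h : FeasSep B M1 M2 M3) (hr : reach M2 M3 1 ≤ reach M2 M3 0) :
    valSep M1 M2 M3 1 ≤ colCost M1 M1init 1 / 2 * (reach M2 M3 0 - reach M2 M3 1)
      + (1 + colCost M1 M1init 1)/2 * reach M2 M3 1 := by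
  obtain ⟨h1, h2, h3, hf2, hf3, -⟩ := h
  have hcross : M1 0 1 ≤ 0 + colCost M1 M1init 1 / 2 := h1.le_add_half_colCost isStoch_M1init 0 1
  have hcol : M1 0 1 + M1 1 1 ≤ 0 + 1/2 + colCost M1 M1init 1 / 2 :=
    h1.add_le_add_half_colCost isStoch_M1init (by decide) 1
  rw [valSep_eq hf2 hf3]
  exact mul_add_mul_le_of_le (by linarith) (by linarith) (reach_nonneg h2 h3 1) hr

theorem FeasSep.reach_le_of_le (h : FeasSep B M1 M2 M3) (hab : M3 0 1 ≤ M3 0 0) :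
    reach M2 M3 0 ≤ (1 + colCost M2 M2init 0)/2 * ((1 + colCost M3 M3init 0)/2) ∧
    reach M2 M3 1 ≤ colCost M2 M2init 1 / 2 * ((1 + colCost M3 M3init 0)/2)
      + 1/2 * ((1 + colCost M3 M3init 1)/2) := by
  obtain ⟨-, h2, h3, -, -, -⟩ := h
  have hq₀ : M2 0 0 + M2 1 0 ≤ 1/2 + 0 + colCost M2 M2init 0 / 2 :=
    h2.add_le_add_half_colCost isStoch_M2init (by decide) 0
  have hq₁ : M2 0 1 ≤ 0 + colCost M2 M2init 1 / 2 := h2.le_add_half_colCost isStoch_M2init 0 1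
  have hq₁' : M2 0 1 + M2 1 1 ≤ 0 + 1/2 + colCost M2 M2init 1 / 2 :=
    h2.add_le_add_half_colCost isStoch_M2init (by decide) 1
  have ha : M3 0 0 ≤ 1/2 + colCost M3 M3init 0 / 2 := h3.le_add_half_colCost isStoch_M3init 0 0
  have hb : M3 0 1 ≤ 1/2 + colCost M3 M3init 1 / 2 := h3.le_add_half_colCost isStoch_M3init 0 1
  have hc₂ := colCost_nonneg M2 M2init
  constructor
  · calc reach M2 M3 0 ≤ (1 + colCost M2 M2init 0)/2 * M3 0 0 :=
          mul_add_mul_le_of_add_le (h2.1 1 0) (by linarith) (h3.1 0 1) hab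
      _ ≤ _ := by gcongr <;> linarith [hc₂ 0]
  · calc reach M2 M3 1 ≤ colCost M2 M2init 1 / 2 * (M3 0 0 - M3 0 1)
            + (1 + colCost M2 M2init 1)/2 * M3 0 1 :=
          mul_add_mul_le_of_le (by linarith) (by linarith) (h3.1 0 1) hab
      _ = colCost M2 M2init 1 / 2 * M3 0 0 + 1/2 * M3 0 1 := by ring
      _ ≤ _ := by gcongr <;> linarith [hc₂ 1]

theorem FeasSep.reach_le_of_ge (h : FeasSep B M1 M2 M3) (hab : M3 0 0 ≤ M3 0 1) :
    reach M2 M3 0 ≤ colCost M2 M2init 0 / 2 * ((1 + colCost M3 M3init 1)/2)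
      + 1/2 * ((1 + colCost M3 M3init 0)/2) ∧
    reach M2 M3 1 ≤ (1 + colCost M2 M2init 1)/2 * ((1 + colCost M3 M3init 1)/2) := by
  obtain ⟨-, h2, h3, -, -, -⟩ := h
  have hq₀ : M2 1 0 ≤ 0 + colCost M2 M2init 0 / 2 := h2.le_add_half_colCost isStoch_M2init 1 0
  have hq₀' : M2 1 0 + M2 0 0 ≤ 0 + 1/2 + colCost M2 M2init 0 / 2 :=
    h2.add_le_add_half_colCost isStoch_M2init (by decide) 0
  have hq₁ : M2 1 1 + M2 0 1 ≤ 1/2 + 0 + colCost M2 M2init 1 / 2 :=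
    h2.add_le_add_half_colCost isStoch_M2init (by decide) 1
  have ha : M3 0 0 ≤ 1/2 + colCost M3 M3init 0 / 2 := h3.le_add_half_colCost isStoch_M3init 0 0
  have hb : M3 0 1 ≤ 1/2 + colCost M3 M3init 1 / 2 := h3.le_add_half_colCost isStoch_M3init 0 1
  have hc₂ := colCost_nonneg M2 M2init
  constructor
  · calc reach M2 M3 0 = M2 1 0 * M3 0 1 + M2 0 0 * M3 0 0 := add_comm _ _
      _ ≤ colCost M2 M2init 0 / 2 * (M3 0 1 - M3 0 0)
            + (1 + colCost M2 M2init 0)/2 * M3 0 0 :=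
          mul_add_mul_le_of_le (by linarith) (by linarith) (h3.1 0 0) hab
      _ = colCost M2 M2init 0 / 2 * M3 0 1 + 1/2 * M3 0 0 := by ring
      _ ≤ _ := by gcongr <;> linarith [hc₂ 0]
  · calc reach M2 M3 1 = M2 1 1 * M3 0 1 + M2 0 1 * M3 0 0 := add_comm _ _
      _ ≤ (1 + colCost M2 M2init 1)/2 * M3 0 1 :=
          mul_add_mul_le_of_add_le (h2.1 0 1) (by linarith) (h3.1 0 0) hab
      _ ≤ _ := by gcongr <;> linarith [hc₂ 1]

end Layers

theorem FeasSep.false_of_reach_le_of_forall_ge {M1 : Matrix (Fin 3) (Fin 2) ℝ}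
    {M2 : Matrix (Fin 3) (Fin 3) ℝ} {M3 : Matrix (Fin 2) (Fin 3) ℝ} (h : FeasSep 1 M1 M2 M3)
    (hr : reach M2 M3 1 ≤ reach M2 M3 0) (hv : ∀ j, 91/432 ≤ valSep M1 M2 M3 j) : False := by
  have hu := (hv 0).trans (h.valSep_zero_le hr)
  have hv₁ := (hv 1).trans (h.valSep_one_le hr)
  have hc₁ := colCost_nonneg M1 M1init
  have hc₂ := colCost_nonneg M2 M2init
  have hc₃ := colCost_nonneg M3 M3init
  have hw₀ : 0 ≤ (1 + colCost M1 M1init 0)/2 := by linarith [hc₁ 0]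
  have hw₁ : 0 ≤ colCost M1 M1init 1 / 2 := by linarith [hc₁ 1]
  rcases le_total (M3 0 1) (M3 0 0) with hab | hab
  · obtain ⟨hQ₀, hQ₁⟩ := h.reach_le_of_le hab
    refine incompatible_bounds_of_u₃_stronger (hc₁ 0) (hc₁ 1) (hc₂ 0) (hc₂ 1) (hc₃ 0) (hc₃ 1)
      h.colCost_sum_le ?_ ?_
    · nlinarith [mul_le_mul_of_nonneg_left hQ₀ hw₀]
    · nlinarith [mul_le_mul_of_nonneg_left hQ₀ hw₁]
  · obtain ⟨hQ₀, hQ₁⟩ := h.reach_le_of_ge hab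
    refine incompatible_bounds_of_v₃_stronger (hc₁ 0) (hc₁ 1) (hc₂ 0) (hc₂ 1) (hc₃ 0) (hc₃ 1)
      h.colCost_sum_le ?_ ?_
    · nlinarith [mul_le_mul_of_nonneg_left hQ₀ hw₀]
    · nlinarith [mul_le_mul_of_nonneg_left hQ₀ hw₁]

theorem FeasSep.iInf_valSep_lt {M1 : Matrix (Fin 3) (Fin 2) ℝ} {M2 : Matrix (Fin 3) (Fin 3) ℝ}
    {M3 : Matrix (Fin 2) (Fin 3) ℝ} (h : FeasSep 1 M1 M2 M3) :
    ⨅ j, valSep M1 M2 M3 j < 91/432 := by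
  by_contra! hge
  have hv j : 91/432 ≤ valSep M1 M2 M3 j := hge.trans (ciInf_le (Finite.bddBelow_range _) j)
  rcases le_total (reach M2 M3 1) (reach M2 M3 0) with hr | hr
  · exact h.false_of_reach_le_of_forall_ge hr hv
  · refine h.swap.false_of_reach_le_of_forall_ge ?_ fun j => ?_
    · simpa [reach_swap] using hr
    · rw [valSep_swap]; exact hv _

def M1u : Matrix (Fin 3) (Fin 2) ℝ := !![2/3, 0; 0, 1/2; 1/3, 1/2]
def M2u : Matrix (Fin 3) (Fin 3) ℝ := !![2/3, 0, 0; 0, 1/2, 0; 1/3, 1/2, 1]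
def M3u : Matrix (Fin 2) (Fin 3) ℝ := !![2/3, 1/2, 0; 1/3, 1/2, 1]

theorem feasSep_u : FeasSep 1 M1u M2u M3u := by
  refine ⟨⟨?_, ?_⟩, ⟨?_, ?_⟩, ⟨?_, ?_⟩, fun i => ?_, fun i => ?_, ?_⟩
  any_goals intro i j; fin_cases i <;> fin_cases j <;> norm_num [M1u, M2u, M3u]
  any_goals intro j; fin_cases j <;> norm_num [M1u, M2u, M3u, Fin.sum_univ_succ]
  any_goals fin_cases i <;> rfl
  norm_num [cost, M1u, M2u, M3u, M1init, M2init, M3init, Fin.sum_univ_succ, abs_of_pos]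

theorem valSep_u_zero : valSep M1u M2u M3u 0 = 8/27 := by
  norm_num [valSep, M1u, M2u, M3u, mulVec, dotProduct, Fin.sum_univ_succ, Pi.single_apply]

theorem valSep_u_one : valSep M1u M2u M3u 1 = 1/8 := by
  norm_num [valSep, M1u, M2u, M3u, mulVec, dotProduct, Fin.sum_univ_succ, Pi.single_apply]

theorem stmt17 :
    ∃ B : ℝ, 0 < B ∧
      (∃ (A1 : Matrix (Fin 3) (Fin 2) ℝ) (A2 : Matrix (Fin 3) (Fin 3) ℝ)
         (A3 : Matrix (Fin 2) (Fin 3) ℝ) (C1 : Matrix (Fin 3) (Fin 2) ℝ)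
         (C2 : Matrix (Fin 3) (Fin 3) ℝ) (C3 : Matrix (Fin 2) (Fin 3) ℝ),
        FeasSep B A1 A2 A3 ∧ FeasSep B C1 C2 C3 ∧
        ∀ j : Fin 2,
          (1/2) * valSep A1 A2 A3 j + (1/2) * valSep C1 C2 C3 j
            ≥ (1/2) * (1/8 + (1/2 + B/6)^3)) ∧
      (∀ (M1 : Matrix (Fin 3) (Fin 2) ℝ) (M2 : Matrix (Fin 3) (Fin 3) ℝ)
         (M3 : Matrix (Fin 2) (Fin 3) ℝ), FeasSep B M1 M2 M3 →
        (⨅ j : Fin 2, valSep M1 M2 M3 j) < (1/2) * (1/8 + (1/2 + B/6)^3)) := by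
  have htarget : (1/2) * (1/8 + (1/2 + (1:ℝ)/6)^3) = 91/432 := by norm_num
  refine ⟨1, one_pos, ⟨M1u, M2u, M3u, _, _, _, feasSep_u, feasSep_u.swap, fun j => ?_⟩,
    fun M1 M2 M3 h => htarget ▸ h.iInf_valSep_lt⟩
  rw [valSep_swap]
  fin_cases j <;> norm_num [valSep_u_zero, valSep_u_one]

end
end

section
/- In the 4-layer separation instance, for every feasible deterministic budget split (B₁, B₂, B₃) with B₁+B₂+B₃ = B and feasible transition matrices, the sum of the expected rewards of the two starting nodes satisfies w¹_u + w¹_v ≤ 1/8 + (1/2 + B/6)³, with equality possible only when B₁ = B₂ = B₃ = B/3. -/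
open Matrix Finset

noncomputable section

lemma step (p q a b M c : ℝ) (ha : 0 ≤ a) (hb : 0 ≤ b) (haM : a ≤ M) (hbM : b ≤ M)
    (hq : 0 ≤ q) (h1 : p + q - 1/2 ≤ c/2) (h2 : q ≤ c/2) :
    p*a + q*b ≤ a/2 + (c/2)*M := by
  have hM : 0 ≤ M := le_trans ha haM
  rcases le_total p (1/2) with h | h
  · have h3 : p*a ≤ (1/2)*a := mul_le_mul_of_nonneg_right h ha
    have h4 : q*b ≤ q*M := mul_le_mul_of_nonneg_left hbM hq
    have h5 : q*M ≤ (c/2)*M := mul_le_mul_of_nonneg_right h2 hM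
    linarith
  · have h3 : (p-1/2)*a ≤ (p-1/2)*M := mul_le_mul_of_nonneg_left haM (by linarith)
    have h4 : q*b ≤ q*M := mul_le_mul_of_nonneg_left hbM hq
    have h5 : (p-1/2+q)*M ≤ (c/2)*M := mul_le_mul_of_nonneg_right (by linarith) hM
    nlinarith [h3, h4, h5]

lemma maxstep (p q a b M c : ℝ) (ha : 0 ≤ a) (hb : 0 ≤ b) (haM : a ≤ M) (hbM : b ≤ M)
    (hp : 0 ≤ p) (hq : 0 ≤ q) (h1 : p + q - 1/2 ≤ c/2) :
    p*a + q*b ≤ (1/2 + c/2)*M := by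
  have hM : 0 ≤ M := le_trans ha haM
  nlinarith [mul_le_mul_of_nonneg_left haM hp, mul_le_mul_of_nonneg_left hbM hq,
    mul_le_mul_of_nonneg_right (show p+q ≤ 1/2+c/2 by linarith) hM]

lemma amgm (x y z : ℝ) (hx : 0 ≤ x) (hy : 0 ≤ y) (hz : 0 ≤ z) :
    (1/2+x/2)*((1/2+y/2)*(1/2+z/2)) + ((x-y)^2+(y-z)^2+(x-z)^2)/48
      ≤ (1/2+(x+y+z)/6)^3 := by
  nlinarith [mul_nonneg hx (sq_nonneg (y-z)), mul_nonneg hy (sq_nonneg (x-z)),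
    mul_nonneg hz (sq_nonneg (x-y)),
    mul_nonneg (add_nonneg (add_nonneg hx hy) hz) (sq_nonneg (x-y)),
    mul_nonneg (add_nonneg (add_nonneg hx hy) hz) (sq_nonneg (y-z)),
    mul_nonneg (add_nonneg (add_nonneg hx hy) hz) (sq_nonneg (x-z))]

set_option maxHeartbeats 1000000 in
private lemma mainbound (B B1 B2 B3 : ℝ) (hB1 : 0 ≤ B1) (hB2 : 0 ≤ B2) (hB3 : 0 ≤ B3)
    (hsum : B1 + B2 + B3 = B)
    (M1 : Matrix (Fin 3) (Fin 2) ℝ) (M2 : Matrix (Fin 3) (Fin 3) ℝ)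
    (M3 : Matrix (Fin 2) (Fin 3) ℝ)
    (hS1 : IsStoch M1) (hS2 : IsStoch M2) (hS3 : IsStoch M3)
    (hf2 : ∀ i, M2 i 2 = M2init i 2) (hf3 : ∀ i, M3 i 2 = M3init i 2)
    (hc1 : cost M1 M1init ≤ B1) (hc2 : cost M2 M2init ≤ B2) (hc3 : cost M3 M3init ≤ B3) :
    valSep M1 M2 M3 0 + valSep M1 M2 M3 1 ≤ 1/8 + (1/2 + B/6)^3 ∧
    (valSep M1 M2 M3 0 + valSep M1 M2 M3 1 = 1/8 + (1/2 + B/6)^3 →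
      B1 = B/3 ∧ B2 = B/3 ∧ B3 = B/3) := by
  obtain ⟨h1n, h1s⟩ := hS1
  obtain ⟨h2n, h2s⟩ := hS2
  obtain ⟨h3n, h3s⟩ := hS3
  have f20 : M2 0 2 = 0 := by simpa [M2init] using hf2 0
  have f21 : M2 1 2 = 0 := by simpa [M2init] using hf2 1
  have f22 : M2 2 2 = 1 := by simpa [M2init] using hf2 2
  have f30 : M3 0 2 = 0 := by simpa [M3init] using hf3 0
  have f31 : M3 1 2 = 1 := by simpa [M3init] using hf3 1
  have e10 : M1 0 0 + M1 1 0 + M1 2 0 = 1 := by simpa [Fin.sum_univ_three] using h1s 0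
  have e11 : M1 0 1 + M1 1 1 + M1 2 1 = 1 := by simpa [Fin.sum_univ_three] using h1s 1
  have e20 : M2 0 0 + M2 1 0 + M2 2 0 = 1 := by simpa [Fin.sum_univ_three] using h2s 0
  have e21 : M2 0 1 + M2 1 1 + M2 2 1 = 1 := by simpa [Fin.sum_univ_three] using h2s 1
  have e30 : M3 0 0 + M3 1 0 = 1 := by simpa [Fin.sum_univ_two] using h3s 0
  have e31 : M3 0 1 + M3 1 1 = 1 := by simpa [Fin.sum_univ_two] using h3s 1
  -- cost expansions
  have hce1 : cost M1 M1init
      = (|M1 0 0 - 1/2| + |M1 1 0| + |M1 2 0 - 1/2|)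
        + (|M1 0 1| + |M1 1 1 - 1/2| + |M1 2 1 - 1/2|) := by
    simp [cost, M1init, Fin.sum_univ_succ]; ring
  have hce2 : cost M2 M2init
      = (|M2 0 0 - 1/2| + |M2 1 0| + |M2 2 0 - 1/2|)
        + (|M2 0 1| + |M2 1 1 - 1/2| + |M2 2 1 - 1/2|) := by
    simp [cost, M2init, Fin.sum_univ_succ, f20, f21, f22]; ring
  have hce3 : cost M3 M3init
      = (|M3 0 0 - 1/2| + |M3 1 0 - 1/2|) + (|M3 0 1 - 1/2| + |M3 1 1 - 1/2|) := by
    simp [cost, M3init, Fin.sum_univ_succ, f30, f31]; ring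
  -- layer 3 scalar bounds
  have ha3 : M3 0 0 ≤ 1/2 + B3/2 := by
    have := le_abs_self (M3 0 0 - 1/2); have := neg_le_abs (M3 1 0 - 1/2)
    have := abs_nonneg (M3 0 1 - 1/2); have := abs_nonneg (M3 1 1 - 1/2)
    linarith [hce3 ▸ hc3]
  have hb3 : M3 0 1 ≤ 1/2 + B3/2 := by
    have := le_abs_self (M3 0 1 - 1/2); have := neg_le_abs (M3 1 1 - 1/2)
    have := abs_nonneg (M3 0 0 - 1/2); have := abs_nonneg (M3 1 0 - 1/2)
    linarith [hce3 ▸ hc3]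
  have hab3 : M3 0 0 + M3 0 1 ≤ 1 + B3/2 := by
    have := le_abs_self (M3 0 0 - 1/2); have := neg_le_abs (M3 1 0 - 1/2)
    have := le_abs_self (M3 0 1 - 1/2); have := neg_le_abs (M3 1 1 - 1/2)
    linarith [hce3 ▸ hc3]
  -- per-column cost facts for M2
  have cu2nn : (0:ℝ) ≤ |M2 0 0 - 1/2| + |M2 1 0| + |M2 2 0 - 1/2| := by positivity
  have cv2nn : (0:ℝ) ≤ |M2 0 1| + |M2 1 1 - 1/2| + |M2 2 1 - 1/2| := by positivity
  have hq2 : M2 1 0 ≤ B2/2 := by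
    have := neg_le_abs (M2 0 0 - 1/2); have := le_abs_self (M2 1 0)
    have := neg_le_abs (M2 2 0 - 1/2)
    linarith [hce2 ▸ hc2, cv2nn, e20]
  have hpq2 : M2 0 0 + M2 1 0 - 1/2 ≤ B2/2 := by
    have := le_abs_self (M2 0 0 - 1/2); have := le_abs_self (M2 1 0)
    have := neg_le_abs (M2 2 0 - 1/2)
    linarith [hce2 ▸ hc2, cv2nn, e20]
  have hp2' : M2 0 1 ≤ B2/2 := by
    have := le_abs_self (M2 0 1); have := neg_le_abs (M2 1 1 - 1/2)
    have := neg_le_abs (M2 2 1 - 1/2)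
    linarith [hce2 ▸ hc2, cu2nn, e21]
  have hpq2' : M2 0 1 + M2 1 1 - 1/2 ≤ B2/2 := by
    have := le_abs_self (M2 0 1); have := le_abs_self (M2 1 1 - 1/2)
    have := neg_le_abs (M2 2 1 - 1/2)
    linarith [hce2 ▸ hc2, cu2nn, e21]
  -- refined: columnwise costs for the sum bound
  set cu2 := |M2 0 0 - 1/2| + |M2 1 0| + |M2 2 0 - 1/2| with hcu2
  set cv2 := |M2 0 1| + |M2 1 1 - 1/2| + |M2 2 1 - 1/2| with hcv2
  have hq2c : M2 1 0 ≤ cu2/2 := by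
    have := neg_le_abs (M2 0 0 - 1/2); have := le_abs_self (M2 1 0)
    have := neg_le_abs (M2 2 0 - 1/2); linarith [e20]
  have hpq2c : M2 0 0 + M2 1 0 - 1/2 ≤ cu2/2 := by
    have := le_abs_self (M2 0 0 - 1/2); have := le_abs_self (M2 1 0)
    have := neg_le_abs (M2 2 0 - 1/2); linarith [e20]
  have hp2c : M2 0 1 ≤ cv2/2 := by
    have := le_abs_self (M2 0 1); have := neg_le_abs (M2 1 1 - 1/2)
    have := neg_le_abs (M2 2 1 - 1/2); linarith [e21]
  have hpq2c' : M2 1 1 + M2 0 1 - 1/2 ≤ cv2/2 := by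
    have := le_abs_self (M2 0 1); have := le_abs_self (M2 1 1 - 1/2)
    have := neg_le_abs (M2 2 1 - 1/2); linarith [e21]
  have hcost2 : cu2 + cv2 ≤ B2 := by rw [← hce2]; exact hc2
  -- M1 columns
  set cu1 := |M1 0 0 - 1/2| + |M1 1 0| + |M1 2 0 - 1/2| with hcu1
  set cv1 := |M1 0 1| + |M1 1 1 - 1/2| + |M1 2 1 - 1/2| with hcv1
  have hq1c : M1 1 0 ≤ cu1/2 := by
    have := neg_le_abs (M1 0 0 - 1/2); have := le_abs_self (M1 1 0)
    have := neg_le_abs (M1 2 0 - 1/2); linarith [e10]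
  have hpq1c : M1 0 0 + M1 1 0 - 1/2 ≤ cu1/2 := by
    have := le_abs_self (M1 0 0 - 1/2); have := le_abs_self (M1 1 0)
    have := neg_le_abs (M1 2 0 - 1/2); linarith [e10]
  have hp1c : M1 0 1 ≤ cv1/2 := by
    have := le_abs_self (M1 0 1); have := neg_le_abs (M1 1 1 - 1/2)
    have := neg_le_abs (M1 2 1 - 1/2); linarith [e11]
  have hpq1c' : M1 1 1 + M1 0 1 - 1/2 ≤ cv1/2 := by
    have := le_abs_self (M1 0 1); have := le_abs_self (M1 1 1 - 1/2)
    have := neg_le_abs (M1 2 1 - 1/2); linarith [e11]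
  have hcost1 : cu1 + cv1 ≤ B1 := by rw [← hce1]; exact hc1
  -- layer 2 values
  set a := M3 0 0
  set b := M3 0 1
  set w2u := M2 0 0 * a + M2 1 0 * b with hw2u
  set w2v := M2 0 1 * a + M2 1 1 * b with hw2v
  have ha0 : 0 ≤ a := h3n 0 0
  have hb0 : 0 ≤ b := h3n 0 1
  have hM3 : (0:ℝ) ≤ 1/2 + B3/2 := by linarith
  have hA1 : w2u ≤ a/2 + (cu2/2)*(1/2+B3/2) :=
    step _ _ _ _ _ _ ha0 hb0 ha3 hb3 (h2n 1 0) hpq2c hq2c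
  have hA2 : w2v ≤ b/2 + (cv2/2)*(1/2+B3/2) := by
    have := step (M2 1 1) (M2 0 1) b a (1/2+B3/2) cv2 hb0 ha0 hb3 ha3 (h2n 0 1) hpq2c' hp2c
    rw [hw2v]; linarith
  have hU1 : w2u ≤ (1/2 + B2/2)*(1/2+B3/2) :=
    maxstep _ _ _ _ _ _ ha0 hb0 ha3 hb3 (h2n 0 0) (h2n 1 0) hpq2
  have hU2 : w2v ≤ (1/2 + B2/2)*(1/2+B3/2) := by
    have := maxstep (M2 1 1) (M2 0 1) b a (1/2+B3/2) B2 hb0 ha0 hb3 ha3 (h2n 1 1) (h2n 0 1)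
      (by linarith)
    rw [hw2v]; linarith
  have hw2u0 : 0 ≤ w2u := add_nonneg (mul_nonneg (h2n 0 0) ha0) (mul_nonneg (h2n 1 0) hb0)
  have hw2v0 : 0 ≤ w2v := add_nonneg (mul_nonneg (h2n 0 1) ha0) (mul_nonneg (h2n 1 1) hb0)
  -- layer 1
  have hT1 : M1 0 0 * w2u + M1 1 0 * w2v ≤ w2u/2 + (cu1/2)*((1/2+B2/2)*(1/2+B3/2)) :=
    step _ _ _ _ _ _ hw2u0 hw2v0 hU1 hU2 (h1n 1 0) hpq1c hq1c
  have hT2 : M1 1 1 * w2v + M1 0 1 * w2u ≤ w2v/2 + (cv1/2)*((1/2+B2/2)*(1/2+B3/2)) :=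
    step _ _ _ _ _ _ hw2v0 hw2u0 hU2 hU1 (h1n 0 1) hpq1c' hp1c
  -- value identity
  have hval : valSep M1 M2 M3 0 + valSep M1 M2 M3 1
      = (M1 0 0 * w2u + M1 1 0 * w2v) + (M1 1 1 * w2v + M1 0 1 * w2u) := by
    rw [hw2u, hw2v]
    simp [valSep, mulVec, dotProduct, Fin.sum_univ_succ, f20, f21, f30]
    ring
  have hW0 : (0:ℝ) ≤ (1/2+B2/2)*(1/2+B3/2) := mul_nonneg (by linarith) hM3
  have hprod1 : (cu1/2)*((1/2+B2/2)*(1/2+B3/2)) + (cv1/2)*((1/2+B2/2)*(1/2+B3/2))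
      ≤ (B1/2)*((1/2+B2/2)*(1/2+B3/2)) := by
    linarith [mul_le_mul_of_nonneg_right (show cu1 + cv1 ≤ B1 from hcost1) hW0]
  have hprod2 : (cu2/2)*(1/2+B3/2) + (cv2/2)*(1/2+B3/2) ≤ (B2/2)*(1/2+B3/2) := by
    linarith [mul_le_mul_of_nonneg_right (show cu2 + cv2 ≤ B2 from hcost2) hM3]
  have hfinal : valSep M1 M2 M3 0 + valSep M1 M2 M3 1
      ≤ 1/8 + (1/2+B1/2)*((1/2+B2/2)*(1/2+B3/2)) := by
    have hident : (1+B3/2)/4 + (B2/4)*(1/2+B3/2) + (B1/2)*((1/2+B2/2)*(1/2+B3/2))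
        = 1/8 + (1/2+B1/2)*((1/2+B2/2)*(1/2+B3/2)) := by ring
    have hs2 : w2u + w2v ≤ (1+B3/2)/2 + (B2/2)*(1/2+B3/2) := by linarith
    rw [hval, ← hident]
    linarith [hT1, hT2, hprod1, hs2]
  have hamgm := amgm B1 B2 B3 hB1 hB2 hB3
  rw [hsum] at hamgm
  constructor
  · linarith [hfinal, hamgm, sq_nonneg (B1-B2), sq_nonneg (B2-B3), sq_nonneg (B1-B3)]
  · intro heq
    have h12 : B1 - B2 = 0 := by
      have := sq_nonneg (B2-B3); have := sq_nonneg (B1-B3)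
      have h0 : (B1-B2)^2 = 0 := le_antisymm (by linarith [hfinal, hamgm]) (sq_nonneg _)
      exact sq_eq_zero_iff.mp h0
    have h23 : B2 - B3 = 0 := by
      have := sq_nonneg (B1-B2); have := sq_nonneg (B1-B3)
      have h0 : (B2-B3)^2 = 0 := le_antisymm (by linarith [hfinal, hamgm]) (sq_nonneg _)
      exact sq_eq_zero_iff.mp h0
    exact ⟨by linarith, by linarith, by linarith⟩

theorem stmt18 :
    ∃ B0 : ℝ, 0 < B0 ∧
      ∀ B B1 B2 B3 : ℝ, 0 < B → B ≤ B0 →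
        0 ≤ B1 → 0 ≤ B2 → 0 ≤ B3 → B1 + B2 + B3 = B →
        ∀ (M1 : Matrix (Fin 3) (Fin 2) ℝ) (M2 : Matrix (Fin 3) (Fin 3) ℝ)
          (M3 : Matrix (Fin 2) (Fin 3) ℝ),
          IsStoch M1 → IsStoch M2 → IsStoch M3 →
          (∀ i, M2 i 2 = M2init i 2) → (∀ i, M3 i 2 = M3init i 2) →
          cost M1 M1init ≤ B1 → cost M2 M2init ≤ B2 → cost M3 M3init ≤ B3 →
          valSep M1 M2 M3 0 + valSep M1 M2 M3 1 ≤ 1/8 + (1/2 + B/6)^3 ∧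
          (valSep M1 M2 M3 0 + valSep M1 M2 M3 1 = 1/8 + (1/2 + B/6)^3 →
            B1 = B/3 ∧ B2 = B/3 ∧ B3 = B/3) := by
  exact ⟨1, one_pos, fun B B1 B2 B3 _ _ hB1 hB2 hB3 hsum M1 M2 M3 hS1 hS2 hS3 hf2 hf3 hc1 hc2 hc3 =>
    mainbound B B1 B2 B3 hB1 hB2 hB3 hsum M1 M2 M3 hS1 hS2 hS3 hf2 hf3 hc1 hc2 hc3⟩

end
end
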